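/- arXiv:2507.03767 — 3 statements merged into one kernel-verified Lean document; each statement's English description precedes it below -/
import Mathlib

section
/- Fix n ≥ 1 and real β > n. Define the weighted space D_β of formal power series f = Σ_L a_L z^L (L ranging over multi-indices in ℕ^n) with norm ‖f‖² = Σ_L |a_L|² (|L|+n)^β < ∞. Then D_β is closed under the Cauchy product: there is a constant C = C(n,β) such that for all f, g ∈ D_β, ‖f·g‖ ≤ C ‖f‖ ‖g‖, where (f·g)'s coefficient at L is Σ_{L_1+L_2=L} a_{L_1} b_{L_2}. -/
/-! For the weight `w L = (|L| + n)^β` one has `w (L₁ + L₂) ≤ 2^β (w L₁ + w L₂)`, and `∑ 1 / w`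
converges because `∏ (Lᵢ + 1) ≤ (|L| + n)^n` and `β / n > 1`. By Cauchy–Schwarz on the antidiagonal,
`|c_L|² ≤ (∑ |a_{L₁}|² w L₁ |b_{L₂}|² w L₂) · ∑ 1 / (w L₁ w L₂)`, and since
`1 / (w L₁ w L₂) = (1 / w L₁ + 1 / w L₂) / (w L₁ + w L₂) ≤ 2^β (1 / w L₁ + 1 / w L₂) / w L`,
the last sum is at most `2^(β+1) (∑ 1 / w) / w L`. Multiplying by `w L` and summing over `L`,
the remaining double sum is the Cauchy product of `|a|² w` and `|b|² w`, i.e. `‖f‖² ‖g‖²`. -/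

open Finset

lemma sq_sum_le_sum_sq_mul_mul_sum_inv {ι : Type*} (s : Finset ι) (f : ι → ℝ) {g : ι → ℝ}
    (hg : ∀ i ∈ s, 0 < g i) :
    (∑ i ∈ s, f i) ^ 2 ≤ (∑ i ∈ s, f i ^ 2 * g i) * ∑ i ∈ s, (g i)⁻¹ := by
  obtain rfl | hs := s.eq_empty_or_nonempty
  · simp
  have hg' : ∀ i ∈ s, 0 < (g i)⁻¹ := fun i hi => inv_pos.2 (hg i hi)
  have h := sq_sum_div_le_sum_sq_div s f hg'
  simpa only [div_inv_eq_mul, div_le_iff₀ (sum_pos hg' hs)] using h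

lemma Summable.sum_comp_le_tsum_of_injOn {ι α : Type*} {f : α → ℝ} (hf : Summable f)
    (hf0 : ∀ x, 0 ≤ f x) {s : Finset ι} {π : ι → α} (hπ : Set.InjOn π s) :
    ∑ i ∈ s, f (π i) ≤ ∑' x, f x := by
  classical
  rw [← sum_image hπ]
  exact hf.sum_le_tsum _ fun x _ => hf0 x

section WeightedCauchyProduct

variable {A : Type*} [AddCancelCommMonoid A] [HasAntidiagonal A]
  {w : A → ℝ} {c : ℝ}

lemma sum_antidiagonal_inv_mul_le (hw : ∀ x, 0 < w x) (hc : ∀ x y, w (x + y) ≤ c * (w x + w y))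
    (hS : Summable fun x => (w x)⁻¹) (n : A) :
    ∑ kl ∈ antidiagonal n, (w kl.1 * w kl.2)⁻¹ ≤ 2 * c * (∑' x, (w x)⁻¹) / w n := by
  have hc0 : 0 < c := by
    have h := (hw (n + n)).trans_le (hc n n)
    exact pos_of_mul_pos_left h (by linarith [hw n])
  have hterm : ∀ kl ∈ antidiagonal n,
      (w kl.1 * w kl.2)⁻¹ ≤ c / w n * ((w kl.1)⁻¹ + (w kl.2)⁻¹) := by
    intro kl hkl
    have h := hc kl.1 kl.2
    rw [HasAntidiagonal.mem_antidiagonal.1 hkl] at h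
    have := hw kl.1
    have := hw kl.2
    rw [div_mul_eq_mul_div, le_div_iff₀ (hw n)]
    calc (w kl.1 * w kl.2)⁻¹ * w n ≤ (w kl.1 * w kl.2)⁻¹ * (c * (w kl.1 + w kl.2)) := by gcongr
      _ = c * ((w kl.1)⁻¹ + (w kl.2)⁻¹) := by field_simp; ring
  have hfst := hS.sum_comp_le_tsum_of_injOn (fun x => (inv_pos.2 (hw x)).le)
    (s := antidiagonal n) (π := Prod.fst)
    fun p hp q hq => (HasAntidiagonal.antidiagonal_congr hp hq).2
  have hsnd := hS.sum_comp_le_tsum_of_injOn (fun x => (inv_pos.2 (hw x)).le)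
    (s := antidiagonal n) (π := Prod.snd)
    fun p hp q hq => (HasAntidiagonal.antidiagonal_congr' hp hq).2
  calc ∑ kl ∈ antidiagonal n, (w kl.1 * w kl.2)⁻¹
      ≤ ∑ kl ∈ antidiagonal n, c / w n * ((w kl.1)⁻¹ + (w kl.2)⁻¹) := sum_le_sum hterm
    _ = c / w n * (∑ kl ∈ antidiagonal n, (w kl.1)⁻¹ + ∑ kl ∈ antidiagonal n, (w kl.2)⁻¹) := by
      rw [← mul_sum, sum_add_distrib]
    _ ≤ c / w n * (∑' x, (w x)⁻¹ + ∑' x, (w x)⁻¹) := by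
      have := hw n
      gcongr
    _ = 2 * c * (∑' x, (w x)⁻¹) / w n := by ring

variable {R : Type*} [NonUnitalSeminormedRing R]

lemma norm_sum_antidiagonal_mul_sq_mul_le (hw : ∀ x, 0 < w x)
    (hc : ∀ x y, w (x + y) ≤ c * (w x + w y)) (hS : Summable fun x => (w x)⁻¹) (a b : A → R)
    (n : A) :
    ‖∑ kl ∈ antidiagonal n, a kl.1 * b kl.2‖ ^ 2 * w n ≤
      2 * c * (∑' x, (w x)⁻¹) *
        ∑ kl ∈ antidiagonal n, ‖a kl.1‖ ^ 2 * w kl.1 * (‖b kl.2‖ ^ 2 * w kl.2) := by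
  have hnorm : ‖∑ kl ∈ antidiagonal n, a kl.1 * b kl.2‖ ≤
      ∑ kl ∈ antidiagonal n, ‖a kl.1‖ * ‖b kl.2‖ :=
    (norm_sum_le _ _).trans (sum_le_sum fun kl _ => norm_mul_le _ _)
  have hwn := hw n
  have hsplit : ∑ kl ∈ antidiagonal n, (‖a kl.1‖ * ‖b kl.2‖) ^ 2 * (w kl.1 * w kl.2) =
      ∑ kl ∈ antidiagonal n, ‖a kl.1‖ ^ 2 * w kl.1 * (‖b kl.2‖ ^ 2 * w kl.2) :=
    sum_congr rfl fun kl _ => by ring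
  have hT : 0 ≤ ∑ kl ∈ antidiagonal n, ‖a kl.1‖ ^ 2 * w kl.1 * (‖b kl.2‖ ^ 2 * w kl.2) :=
    sum_nonneg fun kl _ => by have := hw kl.1; have := hw kl.2; positivity
  calc ‖∑ kl ∈ antidiagonal n, a kl.1 * b kl.2‖ ^ 2 * w n
      ≤ (∑ kl ∈ antidiagonal n, ‖a kl.1‖ * ‖b kl.2‖) ^ 2 * w n := by gcongr
    _ ≤ (∑ kl ∈ antidiagonal n, (‖a kl.1‖ * ‖b kl.2‖) ^ 2 * (w kl.1 * w kl.2)) *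
          (∑ kl ∈ antidiagonal n, (w kl.1 * w kl.2)⁻¹) * w n := by
      gcongr
      exact sq_sum_le_sum_sq_mul_mul_sum_inv _ _ fun kl _ => mul_pos (hw _) (hw _)
    _ ≤ (∑ kl ∈ antidiagonal n, ‖a kl.1‖ ^ 2 * w kl.1 * (‖b kl.2‖ ^ 2 * w kl.2)) *
          (2 * c * (∑' x, (w x)⁻¹) / w n) * w n := by
      rw [hsplit]
      gcongr
      exact sum_antidiagonal_inv_mul_le hw hc hS n
    _ = _ := by rw [mul_assoc, div_mul_cancel₀ _ hwn.ne', mul_comm]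

theorem weighted_sq_cauchy_product_summable_and_tsum_le (hw : ∀ x, 0 < w x)
    (hc : ∀ x y, w (x + y) ≤ c * (w x + w y)) (hS : Summable fun x => (w x)⁻¹) {a b : A → R}
    (ha : Summable fun x => ‖a x‖ ^ 2 * w x) (hb : Summable fun x => ‖b x‖ ^ 2 * w x) :
    Summable (fun n => ‖∑ kl ∈ antidiagonal n, a kl.1 * b kl.2‖ ^ 2 * w n) ∧
      ∑' n, ‖∑ kl ∈ antidiagonal n, a kl.1 * b kl.2‖ ^ 2 * w n ≤
        2 * c * (∑' x, (w x)⁻¹) * ((∑' x, ‖a x‖ ^ 2 * w x) * ∑' x, ‖b x‖ ^ 2 * w x) := by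
  set F := fun x => ‖a x‖ ^ 2 * w x
  set G := fun x => ‖b x‖ ^ 2 * w x
  have hab : Summable fun p : A × A => F p.1 * G p.2 :=
    ha.mul_of_nonneg hb (fun x => by have := hw x; positivity)
      (fun x => by have := hw x; positivity)
  have hconv := (summable_sum_mul_antidiagonal_of_summable_mul hab).mul_left
    (2 * c * ∑' x, (w x)⁻¹)
  have hle := norm_sum_antidiagonal_mul_sq_mul_le hw hc hS a b
  have hsum := Summable.of_nonneg_of_le (fun n => by have := hw n; positivity) hle hconv
  refine ⟨hsum, ?_⟩
  rw [ha.tsum_mul_tsum_eq_tsum_sum_antidiagonal hb hab, ← tsum_mul_left]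
  exact hsum.tsum_le_tsum hle hconv

end WeightedCauchyProduct

lemma sum_Iic_tsub_eq_sum_antidiagonal {A M : Type*} [AddCommMonoid A] [PartialOrder A]
    [CanonicallyOrderedAdd A] [Sub A] [OrderedSub A] [AddLeftReflectLE A]
    [LocallyFiniteOrderBot A] [HasAntidiagonal A] [AddCommMonoid M] (f : A → A → M) (n : A) :
    ∑ x ∈ Iic n, f x (n - x) = ∑ kl ∈ antidiagonal n, f kl.1 kl.2 := by
  refine sum_nbij' (fun x => (x, n - x)) Prod.fst (fun x hx => ?_) (fun kl hkl => ?_)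
    (fun _ _ => rfl) (fun kl hkl => ?_) (fun _ _ => rfl)
  · exact HasAntidiagonal.mem_antidiagonal.2 (add_tsub_cancel_of_le (mem_Iic.1 hx))
  · exact mem_Iic.2 (HasAntidiagonal.antidiagonal.fst_le hkl)
  · obtain rfl := HasAntidiagonal.mem_antidiagonal.1 hkl
    simp

lemma Real.add_rpow_le_two_rpow_mul_add_rpow {x y p : ℝ} (hx : 0 ≤ x) (hy : 0 ≤ y)
    (hp : 0 ≤ p) : (x + y) ^ p ≤ 2 ^ p * (x ^ p + y ^ p) := by
  calc (x + y) ^ p ≤ (2 * max x y) ^ p := by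
        gcongr
        linarith [le_max_left x y, le_max_right x y]
    _ = 2 ^ p * max x y ^ p := Real.mul_rpow zero_le_two (le_max_of_le_left hx)
    _ ≤ 2 ^ p * (x ^ p + y ^ p) := by
        gcongr
        rcases max_choice x y with h | h <;> rw [h]
        · linarith [Real.rpow_nonneg hy p]
        · linarith [Real.rpow_nonneg hx p]

lemma summable_fin_pi_prod {ι : Type*} {f : ι → ℝ} (hf0 : ∀ i, 0 ≤ f i) (hf : Summable f) :
    ∀ m : ℕ, Summable fun L : Fin m → ι => ∏ j, f (L j)
  | 0 => .of_finite
  | m + 1 => by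
    have h := (hf.mul_of_nonneg (summable_fin_pi_prod hf0 hf m) hf0
      fun L => prod_nonneg fun j _ => hf0 (L j)).comp_injective
        (Fin.consEquiv fun _ => ι).symm.injective
    refine h.congr fun L => ?_
    simp [Fin.consEquiv, Fin.prod_univ_succ, Fin.tail]

noncomputable def multiIndexWeight (n : ℕ) (β : ℝ) (L : Fin n → ℕ) : ℝ :=
  ((∑ i, (L i : ℝ)) + n) ^ β

section multiIndexWeight

variable {n : ℕ} {β : ℝ}

lemma multiIndexWeight_pos (hn : 0 < n) (β : ℝ) (L : Fin n → ℕ) :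
    0 < multiIndexWeight n β L := by
  unfold multiIndexWeight
  have : (0 : ℝ) < n := by exact_mod_cast hn
  positivity

lemma multiIndexWeight_add_le (hβ : 0 ≤ β) (L₁ L₂ : Fin n → ℕ) :
    multiIndexWeight n β (L₁ + L₂) ≤
      2 ^ β * (multiIndexWeight n β L₁ + multiIndexWeight n β L₂) := by
  unfold multiIndexWeight
  calc ((∑ i, ((L₁ + L₂) i : ℝ)) + n) ^ β
      ≤ ((∑ i, (L₁ i : ℝ)) + n + ((∑ i, (L₂ i : ℝ)) + n)) ^ β := by
        refine Real.rpow_le_rpow (by positivity) ?_ hβ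
        simp only [Pi.add_apply, Nat.cast_add, sum_add_distrib]
        linarith [(n.cast_nonneg : (0 : ℝ) ≤ n),
          sum_nonneg fun i (_ : i ∈ univ) => (L₂ i).cast_nonneg (α := ℝ)]
    _ ≤ _ := Real.add_rpow_le_two_rpow_mul_add_rpow (by positivity) (by positivity) hβ

lemma summable_multiIndexWeight_inv (hn : 0 < n) (hβ : n < β) :
    Summable fun L : Fin n → ℕ => (multiIndexWeight n β L)⁻¹ := by
  have hn' : (0 : ℝ) < n := by exact_mod_cast hn
  have hexp : -(β / n) < -1 := by rw [neg_lt_neg_iff, lt_div_iff₀ hn']; linarith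
  have hf : Summable fun k : ℕ => ((k : ℝ) + 1) ^ (-(β / n)) := by
    simpa using (summable_nat_add_iff 1).2 (Real.summable_nat_rpow.2 hexp)
  refine (summable_fin_pi_prod (fun k => by positivity) hf n).of_nonneg_of_le
    (fun L => (inv_pos.2 (multiIndexWeight_pos hn β L)).le) fun L => ?_
  set s := (∑ i, (L i : ℝ)) + n
  have hs : 0 < s := by positivity
  have hprod : ∏ i, ((L i : ℝ) + 1) ≤ s ^ n := by
    calc ∏ i, ((L i : ℝ) + 1) ≤ ∏ _i : Fin n, s := by
          gcongr with i
          have := single_le_sum (f := fun j => (L j : ℝ)) (fun j _ => (L j).cast_nonneg)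
            (mem_univ i)
          have : (1 : ℝ) ≤ n := by exact_mod_cast hn
          simp only [s]
          linarith
      _ = s ^ n := by simp
  calc (multiIndexWeight n β L)⁻¹ = (s ^ n) ^ (-(β / n)) := by
        rw [← Real.rpow_natCast, ← Real.rpow_mul hs.le, mul_neg, mul_div_cancel₀ _ hn'.ne',
          Real.rpow_neg hs.le]
        rfl
    _ ≤ (∏ i, ((L i : ℝ) + 1)) ^ (-(β / n)) :=
        Real.rpow_le_rpow_of_nonpos (by positivity) hprod
          (neg_nonpos.2 (div_nonneg (by linarith) hn'.le))
    _ = ∏ i, ((L i : ℝ) + 1) ^ (-(β / n)) :=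
        (Real.finsetProd_rpow _ _ (fun i _ => by positivity) _).symm

end multiIndexWeight

/-- For `n ≥ 1` and `β > n`, the space `D_β` of power series `Σ a_L z^L` with
`‖f‖² = Σ_L |a_L|² (|L|+n)^β < ∞` is closed under the Cauchy product, with
`‖f·g‖ ≤ C ‖f‖ ‖g‖` for a constant `C = C(n,β) > 0`. -/
theorem stmt_6 (n : ℕ) (hn : 1 ≤ n) (β : ℝ) (hβ : (n : ℝ) < β) :
    ∃ C : ℝ, 0 < C ∧ ∀ a b : (Fin n → ℕ) → ℂ,
      Summable (fun L : Fin n → ℕ => ‖a L‖ ^ 2 * ((∑ i, (L i : ℝ)) + n) ^ β) →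
      Summable (fun L : Fin n → ℕ => ‖b L‖ ^ 2 * ((∑ i, (L i : ℝ)) + n) ^ β) →
      Summable (fun L : Fin n → ℕ =>
          ‖∑ L₁ ∈ Finset.Iic L, a L₁ * b (L - L₁)‖ ^ 2 * ((∑ i, (L i : ℝ)) + n) ^ β) ∧
        Real.sqrt (∑' L : Fin n → ℕ,
            ‖∑ L₁ ∈ Finset.Iic L, a L₁ * b (L - L₁)‖ ^ 2 * ((∑ i, (L i : ℝ)) + n) ^ β) ≤
          C * Real.sqrt (∑' L : Fin n → ℕ, ‖a L‖ ^ 2 * ((∑ i, (L i : ℝ)) + n) ^ β) *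
            Real.sqrt (∑' L : Fin n → ℕ, ‖b L‖ ^ 2 * ((∑ i, (L i : ℝ)) + n) ^ β) := by
  let := HasAntidiagonal.antidiagonalOfLocallyFinite (A := Fin n → ℕ)
  have hw := multiIndexWeight_pos hn β
  have hS := summable_multiIndexWeight_inv hn hβ
  have hSpos : 0 < ∑' L, (multiIndexWeight n β L)⁻¹ :=
    hS.tsum_pos (fun L => (inv_pos.2 (hw L)).le) 0 (inv_pos.2 (hw 0))
  refine ⟨√(2 * 2 ^ β * ∑' L, (multiIndexWeight n β L)⁻¹), by positivity, fun a b ha hb => ?_⟩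
  obtain ⟨hsum, hle⟩ := weighted_sq_cauchy_product_summable_and_tsum_le hw
    (multiIndexWeight_add_le (n.cast_nonneg.trans_lt hβ).le) hS ha hb
  simp only [sum_Iic_tsub_eq_sum_antidiagonal fun L₁ L₂ => a L₁ * b L₂]
  refine ⟨hsum, ?_⟩
  rw [← Real.sqrt_mul (by positivity), ← Real.sqrt_mul (by positivity), mul_assoc]
  exact Real.sqrt_le_sqrt hle
end

section
/- Let n ≥ 2, α > 0, and set ε = (n−1)α/n. Then the series Σ over multi-indices L ∈ ℕ^n of ∏_{i=1}^n (l_i+1)^{−(1+ε)} converges, while the series Σ over L ∈ ℕ^n of [∏_{i=1}^n (l_i+1)^{α−ε}] / (|L|+n)^{α+1} diverges. -/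
/-!
The first series is a product of `n` copies of the `p`-series `∑ₖ (k + 1)^{-(1 + ε)}`, which
converges because `ε > 0`. For the second, on the diagonal `L = (l, …, l)` the term equals
`n^{-(α + 1)} (l + 1)^{n (α - ε) - (α + 1)} = n^{-(α + 1)} (l + 1)⁻¹`, a harmonic series.
-/

theorem summable_pi_prod_of_nonneg {n : ℕ} {β : Fin n → Type*} {f : ∀ i, β i → ℝ}
    (hf₀ : ∀ i b, 0 ≤ f i b) (hf : ∀ i, Summable (f i)) :
    Summable fun L : (∀ i, β i) => ∏ i, f i (L i) := by
  induction n with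
  | zero => exact Summable.of_finite
  | succ n ih =>
    have htail := ih (fun i => hf₀ i.succ) (fun i => hf i.succ)
    rw [← (Fin.consEquiv β).summable_iff]
    simpa [Function.comp_def, Fin.prod_univ_succ] using
      (hf 0).mul_of_nonneg htail (hf₀ 0) fun L => Finset.prod_nonneg fun i _ => hf₀ i.succ _

theorem Real.summable_nat_add_one_rpow_iff {p : ℝ} :
    Summable (fun k : ℕ => ((k : ℝ) + 1) ^ p) ↔ p < -1 := by
  rw [← Real.summable_nat_rpow, ← summable_nat_add_iff 1 (f := fun k : ℕ => (k : ℝ) ^ p)]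
  simp only [Nat.cast_add, Nat.cast_one]

theorem prod_rpow_div_sum_add_rpow_of_const {n : ℕ} [NeZero n] (a b : ℝ) (l : ℕ) :
    (∏ _i : Fin n, ((l : ℝ) + 1) ^ a) / ((∑ _i : Fin n, (l : ℝ)) + n) ^ b
      = (n : ℝ) ^ (-b) * ((l : ℝ) + 1) ^ (n * a - b) := by
  have hl : (0 : ℝ) < l + 1 := by positivity
  have hn : (0 : ℝ) < n := Nat.cast_pos.2 (Nat.pos_of_neZero n)
  rw [Finset.prod_const, Finset.sum_const, Finset.card_univ, Fintype.card_fin, nsmul_eq_mul,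
    ← Real.rpow_natCast, ← Real.rpow_mul hl.le, show (n : ℝ) * l + n = n * (l + 1) by ring,
    Real.mul_rpow hn.le hl.le, Real.rpow_sub hl, Real.rpow_neg hn.le]
  field_simp

/-- For `n ≥ 2`, `α > 0` and `ε = (n−1)α/n`, the series `Σ_L ∏ᵢ (lᵢ+1)^{−(1+ε)}` over
multi-indices `L ∈ ℕ^n` converges, while `Σ_L (∏ᵢ (lᵢ+1)^{α−ε}) / (|L|+n)^{α+1}` diverges. -/
theorem stmt_15 (n : ℕ) (hn : 2 ≤ n) (α : ℝ) (hα : 0 < α) (ε : ℝ)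
    (hε : ε = (n - 1 : ℝ) * α / n) :
    Summable (fun L : Fin n → ℕ => ∏ i, ((L i : ℝ) + 1) ^ (-(1 + ε))) ∧
      ¬ Summable (fun L : Fin n → ℕ =>
          (∏ i, ((L i : ℝ) + 1) ^ (α - ε)) / ((∑ i, (L i : ℝ)) + n) ^ (α + 1)) := by
  have : NeZero n := ⟨by omega⟩
  have hn' : (2 : ℝ) ≤ n := by exact_mod_cast hn
  have hε₀ : 0 < ε := by
    rw [hε]
    exact div_pos (mul_pos (by linarith) hα) (by linarith)
  have hpseries : Summable fun k : ℕ => ((k : ℝ) + 1) ^ (-(1 + ε)) :=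
    Real.summable_nat_add_one_rpow_iff.2 (by linarith)
  have hpseries₀ (k : ℕ) : 0 ≤ ((k : ℝ) + 1) ^ (-(1 + ε)) := by positivity
  have hprod := summable_pi_prod_of_nonneg (fun _ : Fin n => hpseries₀) (fun _ => hpseries)
  refine ⟨hprod, fun hsum => ?_⟩
  have hexp : n * (α - ε) - (α + 1) = -1 := by rw [hε]; field_simp; ring
  have hdiag := hsum.comp_injective (Function.const_injective (α := Fin n) (β := ℕ))
  simp only [Function.comp_def, Function.const_apply,
    prod_rpow_div_sum_add_rpow_of_const, hexp] at hdiag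
  have hconst : (n : ℝ) ^ (-(α + 1)) ≠ 0 := by positivity
  exact lt_irrefl _ (Real.summable_nat_add_one_rpow_iff.1 ((summable_mul_left_iff hconst).1 hdiag))
end

section
/- Let H be a Hilbert space, g ∈ H, and let (v_k)_{k≥0} be an orthogonal family of nonzero vectors in H such that ⟨g, v_k⟩ = ⟨g, v_0⟩ for all k and ‖v_k‖² ≤ M·(k+1)^β for some M > 0 and β < 1. Then ⟨g, v_0⟩ = 0. -/
open scoped InnerProductSpace

/-! Normalising the orthogonal family gives an orthonormal one, against which Bessel's inequality
bounds `∑ₖ |⟨g, v_k⟩|² / ‖v_k‖² = |⟨g, v₀⟩|² ∑ₖ ‖v_k‖⁻²` by `‖g‖²`. Since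
`‖v_k‖⁻² ≥ M⁻¹ (k+1)^(-β)` and `β < 1`, the series `∑ₖ ‖v_k‖⁻²` diverges, so `⟨g, v₀⟩ = 0`. -/

section OrthogonalFamily

variable {𝕜 E ι : Type*} [RCLike 𝕜] [NormedAddCommGroup E] [InnerProductSpace 𝕜 E] {v : ι → E}

theorem orthonormal_inv_norm_smul (hne : ∀ i, v i ≠ 0)
    (horth : Pairwise fun i j => ⟪v i, v j⟫_𝕜 = 0) :
    Orthonormal 𝕜 fun i => (‖v i‖ : 𝕜)⁻¹ • v i := by
  refine ⟨fun i => norm_smul_inv_norm (hne i), fun i j hij => ?_⟩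
  simp only [inner_smul_left, inner_smul_right, horth hij, mul_zero]

theorem summable_norm_inner_sq_div_norm_sq (hne : ∀ i, v i ≠ 0)
    (horth : Pairwise fun i j => ⟪v i, v j⟫_𝕜 = 0) (x : E) :
    Summable fun i => ‖⟪v i, x⟫_𝕜‖ ^ 2 / ‖v i‖ ^ 2 := by
  refine ((orthonormal_inv_norm_smul hne horth).inner_products_summable (x := x)).congr
    fun i => ?_
  rw [inner_smul_left, norm_mul, RCLike.norm_conj, norm_inv, RCLike.norm_ofReal, abs_norm]
  ring

theorem eq_zero_of_inner_eq_const_of_not_summable (hne : ∀ i, v i ≠ 0)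
    (horth : Pairwise fun i j => ⟪v i, v j⟫_𝕜 = 0) {x : E} {c : 𝕜}
    (hc : ∀ i, ⟪x, v i⟫_𝕜 = c) (hdiv : ¬Summable fun i => (‖v i‖ ^ 2)⁻¹) : c = 0 := by
  by_contra hc0
  have hsum := summable_norm_inner_sq_div_norm_sq hne horth x
  simp only [norm_inner_symm (v _) x, hc, div_eq_mul_inv] at hsum
  exact hdiv ((summable_mul_left_iff (by positivity)).mp hsum)

end OrthogonalFamily

theorem Real.not_summable_nat_add_one_rpow_inv {β : ℝ} (hβ : β ≤ 1) :
    ¬Summable fun k : ℕ => (((k : ℝ) + 1) ^ β)⁻¹ := by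
  intro h
  have h' : Summable fun k : ℕ => ((((k + 1 : ℕ) : ℝ)) ^ β)⁻¹ := by exact_mod_cast h
  exact hβ.not_gt (Real.summable_nat_rpow_inv.mp ((summable_nat_add_iff 1).mp h'))

theorem not_summable_inv_of_le_mul_rpow {a : ℕ → ℝ} (ha : ∀ k, 0 < a k) {M β : ℝ}
    (hM : 0 < M) (hβ : β ≤ 1) (hle : ∀ k : ℕ, a k ≤ M * ((k : ℝ) + 1) ^ β) :
    ¬Summable fun k => (a k)⁻¹ := by
  intro h
  refine Real.not_summable_nat_add_one_rpow_inv hβ ((h.mul_left M).of_nonneg_of_le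
    (fun k => by positivity) fun k => ?_)
  calc (((k : ℝ) + 1) ^ β)⁻¹ = M * (M * ((k : ℝ) + 1) ^ β)⁻¹ := by field_simp
    _ ≤ M * (a k)⁻¹ := by gcongr; exacts [ha k, hle k]

theorem stmt_19_general {H : Type*} [NormedAddCommGroup H] [InnerProductSpace ℂ H]
    (g : H) (v : ℕ → H) (hne : ∀ k, v k ≠ 0)
    (horth : ∀ k l, k ≠ l → ⟪v k, v l⟫_ℂ = 0)
    (heq : ∀ k, ⟪g, v k⟫_ℂ = ⟪g, v 0⟫_ℂ)
    (M β : ℝ) (hM : 0 < M) (hβ : β < 1)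
    (hnorm : ∀ k : ℕ, ‖v k‖ ^ 2 ≤ M * ((k : ℝ) + 1) ^ β) :
    ⟪g, v 0⟫_ℂ = 0 :=
  eq_zero_of_inner_eq_const_of_not_summable hne horth heq
    (not_summable_inv_of_le_mul_rpow (fun k => pow_pos (norm_pos_iff.mpr (hne k)) 2) hM hβ.le hnorm)

/-- If `(v_k)` is an orthogonal family of nonzero vectors in a Hilbert space with
`⟨g, v_k⟩ = ⟨g, v₀⟩` for all `k` and `‖v_k‖² ≤ M (k+1)^β` with `M > 0` and `β < 1`,
then `⟨g, v₀⟩ = 0`. -/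
theorem stmt_19 {H : Type*} [NormedAddCommGroup H] [InnerProductSpace ℂ H] [CompleteSpace H]
    (g : H) (v : ℕ → H) (hne : ∀ k, v k ≠ 0)
    (horth : ∀ k l, k ≠ l → ⟪v k, v l⟫_ℂ = 0)
    (heq : ∀ k, ⟪g, v k⟫_ℂ = ⟪g, v 0⟫_ℂ)
    (M β : ℝ) (hM : 0 < M) (hβ : β < 1)
    (hnorm : ∀ k : ℕ, ‖v k‖ ^ 2 ≤ M * ((k : ℝ) + 1) ^ β) :
    ⟪g, v 0⟫_ℂ = 0 :=
  stmt_19_general g v hne horth heq M β hM hβ hnorm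
end
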